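/- Let n ≥ 2 be an integer and define P_n(r,t) = t^{−n/2} exp(−(n−1)² t/4 − r²/(4t) − (n−1)r/2) · (1+r+t)^{(n−3)/2} · (1+r) for r, t > 0. Then there exists a constant C > 0 (depending only on n) such that C^{-1} r^{(n−5)/2} e^{−(n−1)r/2} e^{−r²/4} ≤ ∫₀^1 P_n(r,t)/t dt ≤ C r^{(n−5)/2} e^{−(n−1)r/2} e^{−r²/4} for all r ≥ 1. -/

import Mathlib

/-!
For `0 < t ≤ 1 ≤ r` the factor `e^{-(n-1)²t/4} (1+r+t)^{(n-3)/2} (1+r)` of `P_n(r,t)/t` is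
comparable to `r^{(n-1)/2}`, so `K₁(r)` is comparable to `r^{(n-1)/2} e^{-(n-1)r/2} J(r²/4)`, where
`J(a) = ∫₀¹ t^{-n/2-1} e^{-a/t} dt`. Writing `a/t = a(2-t) + a(1-t)²/t`, the second term absorbs
the singularity of the power at `t = 0` once `a ≥ 1/4`, so `J(a) ≲ ∫₀¹ e^{a(t-2)} dt ≤ e^{-a}/a`;
conversely the integrand is at least `e^{-(a+1)}` on `[a/(a+1), 1]`, so `J(a) ≳ e^{-a}/a`.
-/

open MeasureTheory Real Set

theorem rpow_le_rpow_abs_of_one_le {ρ k : ℝ} (p : ℝ) (h1 : 1 ≤ ρ) (hk : ρ ≤ k) :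
    ρ ^ p ≤ k ^ |p| :=
  (rpow_le_rpow_of_exponent_le h1 (le_abs_self p)).trans
    (rpow_le_rpow (by linarith) hk (abs_nonneg p))

theorem rpow_neg_abs_le_rpow_of_one_le {ρ k : ℝ} (p : ℝ) (h1 : 1 ≤ ρ) (hk : ρ ≤ k) :
    k ^ (-|p|) ≤ ρ ^ p :=
  (rpow_le_rpow_of_nonpos (by linarith) hk (neg_nonpos.2 (abs_nonneg p))).trans
    (rpow_le_rpow_of_exponent_le h1 (neg_abs_le p))

theorem rpow_mem_Icc_of_le_mul {x y k : ℝ} (p : ℝ) (hy : 0 < y) (hyx : y ≤ x) (hxk : x ≤ k * y) :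
    x ^ p ∈ Icc (k ^ (-|p|) * y ^ p) (k ^ |p| * y ^ p) := by
  have h1 : 1 ≤ x / y := (one_le_div hy).2 hyx
  have hk : x / y ≤ k := (div_le_iff₀ hy).2 hxk
  have hx : x ^ p = (x / y) ^ p * y ^ p := by
    rw [div_rpow (by linarith) hy.le, div_mul_cancel₀ _ (rpow_pos_of_pos hy p).ne']
  have hyp : 0 ≤ y ^ p := by positivity
  rw [hx]
  exact ⟨mul_le_mul_of_nonneg_right (rpow_neg_abs_le_rpow_of_one_le p h1 hk) hyp,
    mul_le_mul_of_nonneg_right (rpow_le_rpow_abs_of_one_le p h1 hk) hyp⟩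

theorem exp_neg_mul_mul_rpow_mul_mem_Icc {b p r t : ℝ} (hb : 0 ≤ b) (hr : 1 ≤ r) (ht0 : 0 ≤ t)
    (ht1 : t ≤ 1) :
    exp (-(b * t)) * (1 + r + t) ^ p * (1 + r) ∈
      Icc (exp (-b) * 3 ^ (-|p|) * r ^ (p + 1)) (2 * 3 ^ |p| * r ^ (p + 1)) := by
  have hr0 : 0 < r := by linarith
  obtain ⟨hlo, hup⟩ :=
    rpow_mem_Icc_of_le_mul (x := 1 + r + t) (k := 3) p hr0 (by linarith) (by linarith)
  have hexp_lo : exp (-b) ≤ exp (-(b * t)) := exp_le_exp.2 (by nlinarith)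
  have hexp_up : exp (-(b * t)) ≤ 1 := exp_le_one_iff.2 (by nlinarith)
  rw [rpow_add_one hr0.ne']
  refine ⟨?_, ?_⟩
  · calc exp (-b) * 3 ^ (-|p|) * (r ^ p * r) = exp (-b) * (3 ^ (-|p|) * r ^ p) * r := by ring
      _ ≤ exp (-(b * t)) * (1 + r + t) ^ p * (1 + r) := by gcongr; linarith
  · calc exp (-(b * t)) * (1 + r + t) ^ p * (1 + r) ≤ 1 * (3 ^ |p| * r ^ p) * (2 * r) := by
          gcongr; linarith
      _ = 2 * 3 ^ |p| * (r ^ p * r) := by ring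

noncomputable def daviesMandouvalos (ν r t : ℝ) : ℝ :=
  t ^ (-ν / 2) * exp (-((ν - 1) ^ 2 * t / 4) - r ^ 2 / (4 * t) - (ν - 1) * r / 2) *
    (1 + r + t) ^ ((ν - 3) / 2) * (1 + r)

theorem daviesMandouvalos_div_eq {ν r t : ℝ} (ht : 0 < t) :
    daviesMandouvalos ν r t / t =
      exp (-((ν - 1) ^ 2 / 4 * t)) * (1 + r + t) ^ ((ν - 3) / 2) * (1 + r) *
        exp (-((ν - 1) * r / 2)) * (t ^ (-(ν / 2 + 1)) * exp (-(r ^ 2 / 4 / t))) := by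
  have ht_pow : t ^ (-ν / 2) = t ^ (-(ν / 2 + 1)) * t := by
    rw [← rpow_add_one ht.ne']; ring_nf
  have hexp : exp (-((ν - 1) ^ 2 * t / 4) - r ^ 2 / (4 * t) - (ν - 1) * r / 2) =
      exp (-((ν - 1) ^ 2 / 4 * t)) * exp (-(r ^ 2 / 4 / t)) * exp (-((ν - 1) * r / 2)) := by
    rw [← exp_add, ← exp_add]; congr 1; field_simp; ring
  rw [daviesMandouvalos, ht_pow, hexp]
  field_simp

theorem daviesMandouvalos_div_mem_Icc {ν r t : ℝ} (hr : 1 ≤ r) (ht : t ∈ Ioc (0 : ℝ) 1) :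
    daviesMandouvalos ν r t / t ∈
      Icc (exp (-((ν - 1) ^ 2 / 4)) * 3 ^ (-|(ν - 3) / 2|) *
          (r ^ ((ν - 3) / 2 + 1) * exp (-((ν - 1) * r / 2))) *
          (t ^ (-(ν / 2 + 1)) * exp (-(r ^ 2 / 4 / t))))
        (2 * 3 ^ |(ν - 3) / 2| * (r ^ ((ν - 3) / 2 + 1) * exp (-((ν - 1) * r / 2))) *
          (t ^ (-(ν / 2 + 1)) * exp (-(r ^ 2 / 4 / t)))) := by
  obtain ⟨hlo, hup⟩ := exp_neg_mul_mul_rpow_mul_mem_Icc (b := (ν - 1) ^ 2 / 4) (p := (ν - 3) / 2)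
    (by positivity) hr ht.1.le ht.2
  have hrest : 0 ≤ exp (-((ν - 1) * r / 2)) * (t ^ (-(ν / 2 + 1)) * exp (-(r ^ 2 / 4 / t))) := by
    have := ht.1; positivity
  rw [daviesMandouvalos_div_eq ht.1]
  refine ⟨?_, ?_⟩
  · calc _ = exp (-((ν - 1) ^ 2 / 4)) * 3 ^ (-|(ν - 3) / 2|) * r ^ ((ν - 3) / 2 + 1) *
          (exp (-((ν - 1) * r / 2)) * (t ^ (-(ν / 2 + 1)) * exp (-(r ^ 2 / 4 / t)))) := by ring
      _ ≤ _ := mul_le_mul_of_nonneg_right hlo hrest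
      _ = _ := by ring
  · calc _ = exp (-((ν - 1) ^ 2 / 4 * t)) * (1 + r + t) ^ ((ν - 3) / 2) * (1 + r) *
          (exp (-((ν - 1) * r / 2)) * (t ^ (-(ν / 2 + 1)) * exp (-(r ^ 2 / 4 / t)))) := by ring
      _ ≤ _ := mul_le_mul_of_nonneg_right hup hrest
      _ = _ := by ring

theorem exists_rpow_neg_mul_exp_neg_sq_div_le (m : ℝ) :
    ∃ D, ∀ t ∈ Ioc (0 : ℝ) 1, t ^ (-m) * exp (-((1 - t) ^ 2 / (4 * t))) ≤ D := by
  set K := ⌈m⌉₊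
  refine ⟨K.factorial * 16 ^ K + 2 ^ |m|, fun t ⟨ht0, ht1⟩ => ?_⟩
  have hfact : (0 : ℝ) ≤ K.factorial * 16 ^ K := by positivity
  rcases le_or_gt (1 / 2 : ℝ) t with hhalf | hhalf
  · have hpow : t ^ (-m) ≤ 2 ^ |m| := by
      rw [rpow_neg ht0.le, ← inv_rpow ht0.le]
      exact rpow_le_rpow_abs_of_one_le m (one_le_inv_iff₀.2 ⟨ht0, ht1⟩)
        ((inv_le_comm₀ ht0 two_pos).2 (by linarith))
    have hexp : exp (-((1 - t) ^ 2 / (4 * t))) ≤ 1 := exp_le_one_iff.2 (by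
      have : 0 ≤ (1 - t) ^ 2 / (4 * t) := by positivity
      linarith)
    nlinarith [rpow_nonneg ht0.le (-m), exp_pos (-((1 - t) ^ 2 / (4 * t)))]
  · -- `e^{-x} ≤ K! x^{-K}` with `x = 1 / (16 t)` beats the singularity `t^{-m}`, `m ≤ K`
    have hx : 1 / (16 * t) ≤ (1 - t) ^ 2 / (4 * t) := by
      have hsq : 1 / 4 ≤ (1 - t) ^ 2 := by nlinarith
      rw [div_le_div_iff₀ (by positivity) (by positivity)]
      nlinarith
    have hexp : exp (-((1 - t) ^ 2 / (4 * t))) ≤ K.factorial * (16 * t) ^ K := by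
      have h := pow_div_factorial_le_exp (1 / (16 * t)) (by positivity) K
      rw [div_pow, one_pow, div_div, div_le_iff₀ (by positivity)] at h
      calc exp (-((1 - t) ^ 2 / (4 * t))) ≤ exp (-(1 / (16 * t))) := exp_le_exp.2 (by linarith)
        _ ≤ K.factorial * (16 * t) ^ K := by
          rw [exp_neg, inv_le_iff_one_le_mul₀ (exp_pos _)]
          linarith
    have htK : t ^ (-m) * t ^ K ≤ 1 := by
      rw [← rpow_natCast, ← rpow_add ht0]
      exact rpow_le_one ht0.le ht1 (by linarith [Nat.le_ceil m])
    calc t ^ (-m) * exp (-((1 - t) ^ 2 / (4 * t)))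
        ≤ t ^ (-m) * (K.factorial * (16 * t) ^ K) := by gcongr
      _ = K.factorial * 16 ^ K * (t ^ (-m) * t ^ K) := by ring
      _ ≤ K.factorial * 16 ^ K * 1 := by gcongr
      _ ≤ _ := by linarith [rpow_nonneg (zero_le_two (α := ℝ)) |m|]

theorem exists_rpow_neg_mul_exp_neg_div_le (m : ℝ) :
    ∃ D, ∀ a, 1 / 4 ≤ a → ∀ t ∈ Ioc (0 : ℝ) 1,
      t ^ (-m) * exp (-(a / t)) ≤ D * exp (a * (t - 2)) := by
  obtain ⟨D, hD⟩ := exists_rpow_neg_mul_exp_neg_sq_div_le m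
  refine ⟨D, fun a ha t ht => ?_⟩
  have ht0 := ht.1
  have hsplit : -(a / t) = a * (t - 2) + -(a * ((1 - t) ^ 2 / t)) := by field_simp; ring
  have hq : exp (-(a * ((1 - t) ^ 2 / t))) ≤ exp (-((1 - t) ^ 2 / (4 * t))) := by
    rw [exp_le_exp, neg_le_neg_iff, show (1 - t) ^ 2 / (4 * t) = 1 / 4 * ((1 - t) ^ 2 / t) by ring]
    gcongr
  calc t ^ (-m) * exp (-(a / t))
      = t ^ (-m) * exp (-(a * ((1 - t) ^ 2 / t))) * exp (a * (t - 2)) := by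
        rw [hsplit, exp_add]; ring
    _ ≤ t ^ (-m) * exp (-((1 - t) ^ 2 / (4 * t))) * exp (a * (t - 2)) := by gcongr
    _ ≤ D * exp (a * (t - 2)) := by gcongr; exact hD t ht

theorem integrableOn_rpow_neg_mul_exp_neg_div (m : ℝ) {a : ℝ} (ha : 1 / 4 ≤ a) :
    IntegrableOn (fun t => t ^ (-m) * exp (-(a / t))) (Ioc 0 1) := by
  obtain ⟨D, hD⟩ := exists_rpow_neg_mul_exp_neg_div_le m
  have hdom : IntegrableOn (fun t => D * exp (a * (t - 2))) (Icc 0 1) :=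
    (by fun_prop : Continuous fun t => D * exp (a * (t - 2))).integrableOn_Icc
  refine (hdom.mono_set Ioc_subset_Icc_self).mono' (by fun_prop) ?_
  rw [ae_restrict_iff' measurableSet_Ioc]
  refine ae_of_all _ fun t ht => ?_
  rw [norm_of_nonneg (by have := ht.1; positivity)]
  exact hD a ha t ht

theorem integral_exp_mul_sub_two {a : ℝ} (ha : a ≠ 0) :
    ∫ t in Ioc (0 : ℝ) 1, exp (a * (t - 2)) = (exp (-a) - exp (-(2 * a))) / a := by
  rw [← intervalIntegral.integral_of_le zero_le_one]
  have h := intervalIntegral.integral_comp_mul_sub (a := 0) (b := 1) exp ha (2 * a)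
  simp only [mul_zero, zero_sub, mul_one, integral_exp, smul_eq_mul] at h
  simp_rw [show ∀ x, a * (x - 2) = a * x - 2 * a from fun x => by ring, h,
    show a - 2 * a = -a by ring]
  ring

theorem exists_integral_rpow_neg_mul_exp_neg_div_le (m : ℝ) :
    ∃ C, 0 < C ∧ ∀ a, 1 / 4 ≤ a →
      ∫ t in Ioc (0 : ℝ) 1, t ^ (-m) * exp (-(a / t)) ≤ C * (exp (-a) / a) := by
  obtain ⟨D, hD⟩ := exists_rpow_neg_mul_exp_neg_div_le m
  refine ⟨max D 1, by positivity, fun a ha => ?_⟩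
  have ha0 : 0 < a := by linarith
  have hdom : IntegrableOn (fun t => max D 1 * exp (a * (t - 2))) (Icc 0 1) :=
    (by fun_prop : Continuous fun t => max D 1 * exp (a * (t - 2))).integrableOn_Icc
  calc ∫ t in Ioc (0 : ℝ) 1, t ^ (-m) * exp (-(a / t))
      ≤ ∫ t in Ioc (0 : ℝ) 1, max D 1 * exp (a * (t - 2)) := by
        refine setIntegral_mono_on (integrableOn_rpow_neg_mul_exp_neg_div m ha)
          (hdom.mono_set Ioc_subset_Icc_self) measurableSet_Ioc fun t ht => ?_
        exact (hD a ha t ht).trans (by gcongr; exact le_max_left D 1)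
    _ = max D 1 * ((exp (-a) - exp (-(2 * a))) / a) := by
        rw [integral_const_mul, integral_exp_mul_sub_two ha0.ne']
    _ ≤ max D 1 * (exp (-a) / a) := by
        gcongr; linarith [exp_pos (-(2 * a))]

theorem exp_neg_one_div_five_mul_le_integral_rpow_neg_mul_exp_neg_div {m a : ℝ} (hm : 0 ≤ m)
    (ha : 1 / 4 ≤ a) :
    exp (-1) / 5 * (exp (-a) / a) ≤ ∫ t in Ioc (0 : ℝ) 1, t ^ (-m) * exp (-(a / t)) := by
  have ha0 : 0 < a := by linarith
  set t₀ := a / (a + 1)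
  have ht₀ : 0 < t₀ := by positivity
  have hint := integrableOn_rpow_neg_mul_exp_neg_div m ha
  have hbound : ∀ t ∈ Ioc t₀ 1, exp (-(a + 1)) ≤ t ^ (-m) * exp (-(a / t)) := by
    intro t ⟨ht₀t, ht1⟩
    have ht0 : 0 < t := ht₀.trans ht₀t
    have hat : a / t ≤ a + 1 := by
      rw [div_le_iff₀ ht0]
      rw [div_lt_iff₀ (by linarith)] at ht₀t
      linarith
    calc exp (-(a + 1)) = 1 * exp (-(a + 1)) := (one_mul _).symm
      _ ≤ t ^ (-m) * exp (-(a / t)) := by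
        gcongr
        exact one_le_rpow_of_pos_of_le_one_of_nonpos ht0 ht1 (by linarith)
  have hvol : volume.real (Ioc t₀ 1) = 1 / (a + 1) := by
    rw [Real.volume_real_Ioc_of_le (div_le_one_of_le₀ (by linarith) (by linarith))]
    field_simp; ring
  calc exp (-1) / 5 * (exp (-a) / a) ≤ exp (-(a + 1)) * (1 / (a + 1)) := by
        rw [neg_add, exp_add]
        calc exp (-1) / 5 * (exp (-a) / a) = exp (-a) * exp (-1) * (1 / (5 * a)) := by ring
          _ ≤ exp (-a) * exp (-1) * (1 / (a + 1)) := by gcongr; linarith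
    _ ≤ ∫ t in Ioc t₀ 1, t ^ (-m) * exp (-(a / t)) := by
        rw [← hvol]
        exact setIntegral_ge_of_const_le_real measurableSet_Ioc measure_Ioc_lt_top.ne hbound
          (hint.mono_set (Ioc_subset_Ioc ht₀.le le_rfl))
    _ ≤ ∫ t in Ioc (0 : ℝ) 1, t ^ (-m) * exp (-(a / t)) := by
        refine setIntegral_mono_set hint ?_ (Ioc_subset_Ioc ht₀.le le_rfl).eventuallyLE
        refine (ae_restrict_iff' measurableSet_Ioc).2 (ae_of_all _ fun t ht => ?_)
        have := ht.1
        simp only [Pi.zero_apply]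
        positivity

theorem setIntegral_mem_Icc_of_forall_mem_Icc {X : Type*} [MeasurableSpace X] {μ : Measure X}
    {s : Set X} {f g : X → ℝ} {c C : ℝ} (hs : MeasurableSet s) (hg : IntegrableOn g s μ)
    (hf : AEStronglyMeasurable f (μ.restrict s)) (hfg : ∀ x ∈ s, f x ∈ Icc (c * g x) (C * g x)) :
    ∫ x in s, f x ∂μ ∈ Icc (c * ∫ x in s, g x ∂μ) (C * ∫ x in s, g x ∂μ) := by
  have hf_int : IntegrableOn f s μ := by
    refine (hg.norm.const_mul (|c| + |C|)).mono' hf ((ae_restrict_iff' hs).2 (ae_of_all _ ?_))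
    intro x hx
    calc ‖f x‖ ≤ max |c * g x| |C * g x| := abs_le_max_abs_abs (hfg x hx).1 (hfg x hx).2
      _ ≤ (|c| + |C|) * ‖g x‖ := by
        rw [abs_mul, abs_mul, Real.norm_eq_abs, ← max_mul_of_nonneg _ _ (abs_nonneg _)]
        gcongr
        exact max_le (by linarith [abs_nonneg C]) (by linarith [abs_nonneg c])
  rw [← integral_const_mul, ← integral_const_mul]
  exact ⟨setIntegral_mono_on (hg.const_mul c) hf_int hs fun x hx => (hfg x hx).1,
    setIntegral_mono_on hf_int (hg.const_mul C) hs fun x hx => (hfg x hx).2⟩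

theorem exists_integral_daviesMandouvalos_div_mem_Icc {ν : ℝ} (hν : -2 ≤ ν) :
    ∃ c C, 0 < c ∧ 0 < C ∧ ∀ r, 1 ≤ r →
      ∫ t in Ioc (0 : ℝ) 1, daviesMandouvalos ν r t / t ∈
        Icc (c * (r ^ ((ν - 5) / 2) * exp (-(ν - 1) * r / 2) * exp (-r ^ 2 / 4)))
          (C * (r ^ ((ν - 5) / 2) * exp (-(ν - 1) * r / 2) * exp (-r ^ 2 / 4))) := by
  set c₁ : ℝ := exp (-((ν - 1) ^ 2 / 4)) * 3 ^ (-|(ν - 3) / 2|)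
  set c₂ : ℝ := 2 * 3 ^ |(ν - 3) / 2|
  obtain ⟨D, hD, hJ_le⟩ := exists_integral_rpow_neg_mul_exp_neg_div_le (ν / 2 + 1)
  refine ⟨4 * c₁ * (exp (-1) / 5), 4 * c₂ * D, by positivity, by positivity, fun r hr => ?_⟩
  have hr0 : 0 < r := by linarith
  have ha : 1 / 4 ≤ r ^ 2 / 4 := by nlinarith
  set R := r ^ ((ν - 3) / 2 + 1) * exp (-((ν - 1) * r / 2))
  set G := r ^ ((ν - 5) / 2) * exp (-(ν - 1) * r / 2) * exp (-r ^ 2 / 4)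
  set J := ∫ t in Ioc (0 : ℝ) 1, t ^ (-(ν / 2 + 1)) * exp (-(r ^ 2 / 4 / t))
  have hRG : R * (exp (-(r ^ 2 / 4)) / (r ^ 2 / 4)) = 4 * G := by
    have hpow : r ^ ((ν - 3) / 2 + 1) = r ^ ((ν - 5) / 2) * r ^ 2 := by
      rw [← rpow_natCast, ← rpow_add hr0]; norm_num; ring_nf
    simp only [R, G, hpow, neg_mul, neg_div]
    field_simp
  have hJ_ge := exp_neg_one_div_five_mul_le_integral_rpow_neg_mul_exp_neg_div
    (m := ν / 2 + 1) (by linarith) ha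
  obtain ⟨hK_ge, hK_le⟩ := setIntegral_mem_Icc_of_forall_mem_Icc
    (f := fun t => daviesMandouvalos ν r t / t) (c := c₁ * R) (C := c₂ * R) measurableSet_Ioc
    (integrableOn_rpow_neg_mul_exp_neg_div _ ha)
    (Measurable.aestronglyMeasurable (by unfold daviesMandouvalos; fun_prop))
    fun t ht => daviesMandouvalos_div_mem_Icc (ν := ν) hr ht
  refine ⟨?_, ?_⟩
  · calc 4 * c₁ * (exp (-1) / 5) * G
        = c₁ * R * (exp (-1) / 5 * (exp (-(r ^ 2 / 4)) / (r ^ 2 / 4))) := by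
          linear_combination (-(c₁ * (exp (-1) / 5))) * hRG
      _ ≤ c₁ * R * J := by gcongr
      _ ≤ _ := hK_ge
  · calc _ ≤ c₂ * R * J := hK_le
      _ ≤ c₂ * R * (D * (exp (-(r ^ 2 / 4)) / (r ^ 2 / 4))) := by gcongr; exact hJ_le _ ha
      _ = 4 * c₂ * D * G := by linear_combination (c₂ * D) * hRG

theorem log_kernel_K1_asymp_large_general (n : ℕ) :
    ∃ C : ℝ, 0 < C ∧ ∀ r : ℝ, 1 ≤ r →
      (C⁻¹ * r ^ (((n : ℝ) - 5)/2) * Real.exp (-((n : ℝ) - 1) * r / 2) *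
          Real.exp (-(r^2)/4) ≤
        ∫ t in Set.Ioc (0 : ℝ) 1,
          (t ^ (-(n : ℝ)/2) *
            Real.exp (-(((n : ℝ) - 1)^2 * t / 4) - r^2 / (4 * t) - ((n : ℝ) - 1) * r / 2) *
            (1 + r + t) ^ (((n : ℝ) - 3)/2) * (1 + r)) / t) ∧
      ((∫ t in Set.Ioc (0 : ℝ) 1,
          (t ^ (-(n : ℝ)/2) *
            Real.exp (-(((n : ℝ) - 1)^2 * t / 4) - r^2 / (4 * t) - ((n : ℝ) - 1) * r / 2) *
            (1 + r + t) ^ (((n : ℝ) - 3)/2) * (1 + r)) / t) ≤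
        C * r ^ (((n : ℝ) - 5)/2) * Real.exp (-((n : ℝ) - 1) * r / 2) *
          Real.exp (-(r^2)/4)) := by
  obtain ⟨c, C, hc, hC, hbounds⟩ :=
    exists_integral_daviesMandouvalos_div_mem_Icc (ν := n) (by linarith [n.cast_nonneg (α := ℝ)])
  refine ⟨max C c⁻¹, by positivity, fun r hr => ?_⟩
  obtain ⟨hK_ge, hK_le⟩ := hbounds r hr
  have hG : 0 ≤ r ^ (((n : ℝ) - 5) / 2) * exp (-((n : ℝ) - 1) * r / 2) * exp (-r ^ 2 / 4) := by
    positivity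
  have hinv : (max C c⁻¹)⁻¹ ≤ c := inv_le_of_inv_le₀ hc (le_max_right _ _)
  constructor
  · calc _ = (max C c⁻¹)⁻¹ * (r ^ (((n : ℝ) - 5) / 2) * exp (-((n : ℝ) - 1) * r / 2) *
          exp (-r ^ 2 / 4)) := by ring
      _ ≤ _ := (mul_le_mul_of_nonneg_right hinv hG).trans hK_ge
  · calc _ ≤ _ := hK_le
      _ ≤ max C c⁻¹ * (r ^ (((n : ℝ) - 5) / 2) * exp (-((n : ℝ) - 1) * r / 2) *
          exp (-r ^ 2 / 4)) := mul_le_mul_of_nonneg_right (le_max_left _ _) hG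
      _ = _ := by ring

/-- Large-`r` asymptotics of the short-time logarithmic kernel `K₁(r) = ∫₀^1 P_n(r,t)/t dt`
built from the Davies–Mandouvalos comparison function: there is `C > 0` with
`C⁻¹ r^{(n−5)/2} e^{−(n−1)r/2} e^{−r²/4} ≤ K₁(r) ≤ C r^{(n−5)/2} e^{−(n−1)r/2} e^{−r²/4}`
for all `r ≥ 1`. -/
theorem log_kernel_K1_asymp_large (n : ℕ) (hn : 2 ≤ n) :
    ∃ C : ℝ, 0 < C ∧ ∀ r : ℝ, 1 ≤ r →
      (C⁻¹ * r ^ (((n : ℝ) - 5)/2) * Real.exp (-((n : ℝ) - 1) * r / 2) *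
          Real.exp (-(r^2)/4) ≤
        ∫ t in Set.Ioc (0 : ℝ) 1,
          (t ^ (-(n : ℝ)/2) *
            Real.exp (-(((n : ℝ) - 1)^2 * t / 4) - r^2 / (4 * t) - ((n : ℝ) - 1) * r / 2) *
            (1 + r + t) ^ (((n : ℝ) - 3)/2) * (1 + r)) / t) ∧
      ((∫ t in Set.Ioc (0 : ℝ) 1,
          (t ^ (-(n : ℝ)/2) *
            Real.exp (-(((n : ℝ) - 1)^2 * t / 4) - r^2 / (4 * t) - ((n : ℝ) - 1) * r / 2) *
            (1 + r + t) ^ (((n : ℝ) - 3)/2) * (1 + r)) / t) ≤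
        C * r ^ (((n : ℝ) - 5)/2) * Real.exp (-((n : ℝ) - 1) * r / 2) *
          Real.exp (-(r^2)/4)) :=
  log_kernel_K1_asymp_large_general n
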